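/- Let Γ ⊆ ℤⁿ be an almost periodic pattern, ε > 0, δ > 0, and A ∈ GLₙ(ℝ). Then there exist R > 0 and a relatively dense set Ñ ⊆ ℝⁿ such that: (i) for every R' ≥ R and v ∈ Ñ, D_{R'}⁺((Γ+v) Δ Γ) < ε; (ii) for every v ∈ Ñ, d_∞(Av, ℤⁿ) < δ; and (iii) for every i ∈ I_ℚ(A) (rows of A with all entries rational) and every v ∈ Ñ, the coordinate (Av)_i is an integer. -/

import Mathlib

open MeasureTheory Metric Set Filter

noncomputable def volBall (n : ℕ) (R : ℝ) : ℝ :=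
  (volume (Metric.ball (0 : Fin n → ℝ) R)).toReal

noncomputable def DRplus {n : ℕ} (R : ℝ) (Γ Γ' : Set (Fin n → ℝ)) : ℝ :=
  ⨆ x : Fin n → ℝ, (((symmDiff Γ Γ') ∩ Metric.ball x R).ncard : ℝ) / volBall n R

def RelDense {n : ℕ} (N : Set (Fin n → ℝ)) : Prop :=
  ∃ L > (0:ℝ), ∀ x : Fin n → ℝ, ∃ v ∈ N, dist v x < L

def UnifDiscrete {n : ℕ} (Γ : Set (Fin n → ℝ)) : Prop :=
  ∃ r > (0:ℝ), ∀ x : Fin n → ℝ, (Γ ∩ Metric.ball x r).Subsingleton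

def Delone {n : ℕ} (Γ : Set (Fin n → ℝ)) : Prop :=
  UnifDiscrete Γ ∧ RelDense Γ

def transSet {n : ℕ} (Γ : Set (Fin n → ℝ)) (ε R : ℝ) : Set (Fin n → ℝ) :=
  {v | ∀ R' ≥ R, DRplus R' ((· + v) '' Γ) Γ < ε}

def IsAPP {n : ℕ} (Γ : Set (Fin n → ℝ)) : Prop :=
  Delone Γ ∧ ∀ ε > (0:ℝ), ∃ Rε > (0:ℝ), RelDense (transSet Γ ε Rε)

noncomputable def roundP (x : ℝ) : ℤ := ⌈x - 1/2⌉

noncomputable def roundPi {n : ℕ} (x : Fin n → ℝ) : Fin n → ℝ := fun i => (roundP (x i) : ℝ)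

noncomputable def discr {n : ℕ} (A : Matrix (Fin n) (Fin n) ℝ) (x : Fin n → ℝ) :
    Fin n → ℝ :=
  roundPi (A.mulVec x)

def intLat (n : ℕ) : Set (Fin n → ℝ) := {x | ∀ i, ∃ k : ℤ, x i = (k : ℝ)}

def IQ {n : ℕ} (A : Matrix (Fin n) (Fin n) ℝ) : Set (Fin n) :=
  {i | ∀ j, ∃ q : ℚ, A i j = (q : ℝ)}

/-!
A translate of a relatively dense `Γ ⊆ ℤⁿ` by a non-integral vector is disjoint from `Γ`, so its
discrepancy is bounded below; hence translations with small discrepancy are integral. Discrepancy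
is subadditive under adding translations, so if `D` clears the denominators of the rational rows
of `A`, the `D`-multiples `u` of `ε/(2D)`-translations form a relatively dense set of
`ε/2`-translations with `A u` integral on the rational rows. Sorting these `u` by the cell of `A u`
in the grid `(1/M)ℤⁿ` modulo `ℤⁿ` and taking differences within a cell gives `ε`-translations
`v` with `A v` within `1/M < δ` of `ℤⁿ`; they are still relatively dense, because the subtracted
vector can be taken from a fixed finite set of representatives, one per cell.
-/

def UniformlyLocallyFinite {n : ℕ} (X : Set (Fin n → ℝ)) : Prop :=
  ∀ R : ℝ, ∃ C : ℕ, ∀ x, (X ∩ ball x R).encard ≤ C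

section
variable {n : ℕ} {X Y : Set (Fin n → ℝ)} {R : ℝ}

theorem volBall_eq (hR : 0 < R) : volBall n R = (2 * R) ^ n := by
  rw [volBall, Real.volume_pi_ball _ hR, Fintype.card_fin, ENNReal.toReal_ofReal (by positivity)]

theorem volBall_nonneg : 0 ≤ volBall n R := ENNReal.toReal_nonneg

theorem image_add_right_inter_ball (X : Set (Fin n → ℝ)) (w x : Fin n → ℝ) :
    (· + w) '' X ∩ ball x R = (· + w) '' (X ∩ ball (x - w) R) := by
  rw [← image_inter_preimage]
  congr 2
  ext y
  simp only [mem_preimage, mem_ball, dist_eq_norm]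
  rw [sub_sub_eq_add_sub]

namespace UniformlyLocallyFinite

theorem mono (hY : UniformlyLocallyFinite Y) (h : X ⊆ Y) : UniformlyLocallyFinite X :=
  fun R => (hY R).imp fun _ hC x => (encard_le_encard (inter_subset_inter_left _ h)).trans (hC x)

theorem union (hX : UniformlyLocallyFinite X) (hY : UniformlyLocallyFinite Y) :
    UniformlyLocallyFinite (X ∪ Y) := fun R => by
  obtain ⟨C, hC⟩ := hX R
  obtain ⟨C', hC'⟩ := hY R
  refine ⟨C + C', fun x => ?_⟩
  rw [union_inter_distrib_right, Nat.cast_add]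
  exact (encard_union_le _ _).trans (add_le_add (hC x) (hC' x))

theorem symmDiff (hX : UniformlyLocallyFinite X) (hY : UniformlyLocallyFinite Y) :
    UniformlyLocallyFinite (symmDiff X Y) :=
  (hX.union hY).mono symmDiff_le_sup

theorem image_add_right (hX : UniformlyLocallyFinite X) (w : Fin n → ℝ) :
    UniformlyLocallyFinite ((· + w) '' X) := fun R =>
  (hX R).imp fun _ hC x => by
    rw [image_add_right_inter_ball, (add_left_injective w).injOn.encard_image]
    exact hC _

theorem finite_inter_ball (hX : UniformlyLocallyFinite X) (x : Fin n → ℝ) (R : ℝ) :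
    (X ∩ ball x R).Finite :=
  have ⟨_, hC⟩ := hX R
  finite_of_encard_le_coe (hC x)

theorem bddAbove_ncard_inter_ball_div (hX : UniformlyLocallyFinite X) (R : ℝ) :
    BddAbove (range fun x => ((X ∩ ball x R).ncard : ℝ) / volBall n R) := by
  obtain ⟨C, hC⟩ := hX R
  refine ⟨C / volBall n R, ?_⟩
  rintro _ ⟨x, rfl⟩
  have hcard : (X ∩ ball x R).ncard ≤ C := by
    rw [← ENat.natCast_le_natCast, (hX.finite_inter_ball x R).cast_ncard_eq]
    exact hC x
  exact div_le_div_of_nonneg_right (by exact_mod_cast hcard) volBall_nonneg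

end UniformlyLocallyFinite

theorem uniformlyLocallyFinite_intLat : UniformlyLocallyFinite (intLat n) := fun R => by
  refine ⟨(2 * ⌈R⌉₊ + 1) ^ n, fun x => ?_⟩
  set c : ℤ := (⌈R⌉₊ : ℤ)
  have hsub : intLat n ∩ ball x R ⊆ (fun z : Fin n → ℤ => fun i => (z i : ℝ)) ''
      (Fintype.piFinset fun i => Finset.Icc (⌊x i⌋ - c) (⌊x i⌋ + c) : Set (Fin n → ℤ)) := by
    rintro y ⟨hy, hyx⟩
    choose z hz using hy
    refine ⟨z, ?_, funext fun i => (hz i).symm⟩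
    simp only [Finset.mem_coe, Fintype.mem_piFinset, Finset.mem_Icc]
    intro i
    have hi := abs_lt.1 ((dist_le_pi_dist y x i).trans_lt hyx)
    rw [hz i] at hi
    have hRc : R ≤ c := by simpa [c] using Nat.le_ceil R
    have h1 : ((⌊x i⌋ - c : ℤ) : ℝ) < z i := by push_cast; linarith [Int.floor_le (x i)]
    have h2 : (z i : ℝ) < ((⌊x i⌋ + c + 1 : ℤ) : ℝ) := by
      push_cast; linarith [Int.lt_floor_add_one (x i)]
    exact ⟨(Int.cast_lt.1 h1).le, Int.lt_add_one_iff.1 (Int.cast_lt.1 h2)⟩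
  calc (intLat n ∩ ball x R).encard ≤ _ := encard_le_encard hsub
    _ ≤ _ := encard_image_le _ _
    _ = _ := encard_coe_eq_coe_finsetCard _
    _ = ((2 * ⌈R⌉₊ + 1) ^ n : ℕ) := by
      congr 1
      have hcard : ∀ a : ℤ, (Finset.Icc (a - c) (a + c)).card = 2 * ⌈R⌉₊ + 1 := fun a => by
        rw [Int.card_Icc]; omega
      simp [Fintype.card_piFinset, hcard]

end

section
variable {n : ℕ} {S T U Γ : Set (Fin n → ℝ)} {R ε ε' : ℝ}

theorem DRplus_nonneg : 0 ≤ DRplus R S T :=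
  Real.iSup_nonneg fun _ => div_nonneg (Nat.cast_nonneg _) volBall_nonneg

theorem DRplus_comm : DRplus R S T = DRplus R T S := by
  rw [DRplus, DRplus, symmDiff_comm]

theorem DRplus_self : DRplus R S S = 0 := by
  simp [DRplus]

theorem DRplus_image_add_right (w : Fin n → ℝ) :
    DRplus R ((· + w) '' S) ((· + w) '' T) = DRplus R S T := by
  simp only [DRplus, ← image_symmDiff (add_left_injective w), image_add_right_inter_ball,
    ncard_image_of_injective _ (add_left_injective w)]
  exact (Equiv.subRight w).surjective.iSup_comp
    fun x => ((symmDiff S T ∩ ball x R).ncard : ℝ) / volBall n R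

theorem ncard_inter_ball_div_le_DRplus (h : UniformlyLocallyFinite (symmDiff S T))
    (x : Fin n → ℝ) : ((symmDiff S T ∩ ball x R).ncard : ℝ) / volBall n R ≤ DRplus R S T :=
  le_ciSup (h.bddAbove_ncard_inter_ball_div R) x

theorem DRplus_triangle (hST : UniformlyLocallyFinite (symmDiff S T))
    (hTU : UniformlyLocallyFinite (symmDiff T U)) :
    DRplus R S U ≤ DRplus R S T + DRplus R T U := by
  refine Real.iSup_le (fun x => ?_) (add_nonneg DRplus_nonneg DRplus_nonneg)
  have hcard : (symmDiff S U ∩ ball x R).ncard ≤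
      (symmDiff S T ∩ ball x R).ncard + (symmDiff T U ∩ ball x R).ncard := by
    refine (ncard_le_ncard ?_ ((hST.finite_inter_ball x R).union (hTU.finite_inter_ball x R))).trans
      (ncard_union_le _ _)
    rw [← union_inter_distrib_right]
    exact inter_subset_inter_left _ (symmDiff_triangle S T U)
  calc ((symmDiff S U ∩ ball x R).ncard : ℝ) / volBall n R
      ≤ ((symmDiff S T ∩ ball x R).ncard + (symmDiff T U ∩ ball x R).ncard : ℝ) / volBall n R :=
        div_le_div_of_nonneg_right (by exact_mod_cast hcard) volBall_nonneg
    _ ≤ DRplus R S T + DRplus R T U := by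
      rw [add_div]
      exact add_le_add (ncard_inter_ball_div_le_DRplus hST x) (ncard_inter_ball_div_le_DRplus hTU x)

theorem DRplus_image_add_add_le (hΓ : UniformlyLocallyFinite Γ) (s t : Fin n → ℝ) :
    DRplus R ((· + (s + t)) '' Γ) Γ ≤ DRplus R ((· + s) '' Γ) Γ + DRplus R ((· + t) '' Γ) Γ := by
  have hshift : (· + (s + t)) '' Γ = (· + t) '' ((· + s) '' Γ) := by
    rw [image_image]; simp only [add_assoc]
  calc DRplus R ((· + (s + t)) '' Γ) Γ
      ≤ DRplus R ((· + (s + t)) '' Γ) ((· + t) '' Γ) + DRplus R ((· + t) '' Γ) Γ :=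
        DRplus_triangle ((hΓ.image_add_right _).symmDiff (hΓ.image_add_right _))
          ((hΓ.image_add_right _).symmDiff hΓ)
    _ = DRplus R ((· + s) '' Γ) Γ + DRplus R ((· + t) '' Γ) Γ := by
      rw [hshift, DRplus_image_add_right]

theorem DRplus_image_add_neg (t : Fin n → ℝ) :
    DRplus R ((· + -t) '' Γ) Γ = DRplus R ((· + t) '' Γ) Γ := by
  rw [← DRplus_image_add_right (S := (· + -t) '' Γ) t, image_image]
  simp only [neg_add_cancel_right, image_id', DRplus_comm]

theorem transSet_mono (h : ε ≤ ε') : transSet Γ ε R ⊆ transSet Γ ε' R :=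
  fun _ ht R' hR' => (ht R' hR').trans_le h

theorem add_mem_transSet (hΓ : UniformlyLocallyFinite Γ) {s t : Fin n → ℝ}
    (hs : s ∈ transSet Γ ε R) (ht : t ∈ transSet Γ ε' R) : s + t ∈ transSet Γ (ε + ε') R :=
  fun R' hR' => (DRplus_image_add_add_le hΓ s t).trans_lt (add_lt_add (hs R' hR') (ht R' hR'))

theorem neg_mem_transSet {t : Fin n → ℝ} (ht : t ∈ transSet Γ ε R) : -t ∈ transSet Γ ε R :=
  fun R' hR' => by simpa only [transSet, DRplus_image_add_neg] using ht R' hR'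

theorem sub_mem_transSet (hΓ : UniformlyLocallyFinite Γ) {s t : Fin n → ℝ}
    (hs : s ∈ transSet Γ ε R) (ht : t ∈ transSet Γ ε' R) : s - t ∈ transSet Γ (ε + ε') R := by
  simpa only [sub_eq_add_neg] using add_mem_transSet hΓ hs (neg_mem_transSet ht)

theorem nsmul_mem_transSet (hΓ : UniformlyLocallyFinite Γ) {t : Fin n → ℝ}
    (ht : t ∈ transSet Γ ε R) {k : ℕ} (hk : 0 < k) : k • t ∈ transSet Γ (k * ε) R := by
  induction k, hk using Nat.le_induction with
  | base => simpa using ht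
  | succ k _ ih =>
    rw [succ_nsmul, Nat.cast_succ, add_one_mul]
    exact add_mem_transSet hΓ ih ht

end

section
variable {n : ℕ} {S : Set (Fin n → ℝ)}

theorem RelDense.image_nsmul (hS : RelDense S) {k : ℕ} (hk : 0 < k) :
    RelDense ((k • ·) '' S) := by
  obtain ⟨L, hL, hS⟩ := hS
  have hk' : (0 : ℝ) < k := by exact_mod_cast hk
  refine ⟨k * L, by positivity, fun x => ?_⟩
  obtain ⟨t, ht, htx⟩ := hS ((k : ℝ)⁻¹ • x)
  refine ⟨k • t, mem_image_of_mem _ ht, ?_⟩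
  calc dist (k • t) x = dist ((k : ℝ) • t) ((k : ℝ) • ((k : ℝ)⁻¹ • x)) := by
        rw [Nat.cast_smul_eq_nsmul, smul_inv_smul₀ hk'.ne']
    _ = k * dist t ((k : ℝ)⁻¹ • x) := by rw [dist_smul₀, Real.norm_natCast]
    _ < k * L := by gcongr

theorem RelDense.sub_of_finite {β : Type*} [Finite β] (hS : RelDense S)
    (c : (Fin n → ℝ) → β) : RelDense {v | ∃ u ∈ S, ∃ f ∈ S, c u = c f ∧ v = u - f} := by
  classical
  obtain ⟨L, hL, hS⟩ := hS
  have hrep : ∀ b, ∃ f, (∃ u ∈ S, c u = b) → f ∈ S ∧ c f = b := fun b => by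
    by_cases hb : ∃ u ∈ S, c u = b
    · obtain ⟨u, hu, rfl⟩ := hb
      exact ⟨u, fun _ => ⟨hu, rfl⟩⟩
    · exact ⟨0, fun h => absurd h hb⟩
  choose rep hrep using hrep
  obtain ⟨C, hC⟩ := (finite_range fun b => ‖rep b‖).bddAbove
  refine ⟨L + max C 0, by positivity, fun x => ?_⟩
  obtain ⟨u, hu, hux⟩ := hS x
  obtain ⟨hf, hcf⟩ := hrep (c u) ⟨u, hu, rfl⟩
  refine ⟨u - rep (c u), ⟨u, hu, _, hf, hcf.symm, rfl⟩, ?_⟩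
  calc dist (u - rep (c u)) x ≤ dist (u - rep (c u)) u + dist u x := dist_triangle _ _ _
    _ = ‖rep (c u)‖ + dist u x := by rw [dist_eq_norm, sub_sub_cancel_left, norm_neg]
    _ < L + max C 0 := by linarith [(hC (mem_range_self (c u))).trans (le_max_left C 0)]

end

section
variable {n : ℕ}

noncomputable def cellIndex (M : ℕ) (y : Fin n → ℝ) : Fin n → ZMod M :=
  fun i => (⌊y i * M⌋ : ZMod M)

theorem exists_abs_sub_sub_intCast_lt {M : ℕ} (hM : 0 < M) {a b : ℝ}
    (h : ((⌊a * M⌋ : ℤ) : ZMod M) = (⌊b * M⌋ : ℤ)) : ∃ k : ℤ, |a - b - k| < 1 / M := by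
  obtain ⟨k, hk⟩ := (ZMod.intCast_eq_intCast_iff_dvd_sub _ _ _).1 h.symm
  have hM' : (0 : ℝ) < M := by exact_mod_cast hM
  refine ⟨k, ?_⟩
  have hk' : (⌊a * M⌋ : ℝ) - ⌊b * M⌋ = M * k := by exact_mod_cast hk
  have hlt : |(a - b - k) * M| < 1 := by
    rw [abs_lt]
    constructor <;> linarith [Int.floor_le (a * M), Int.lt_floor_add_one (a * M),
      Int.floor_le (b * M), Int.lt_floor_add_one (b * M)]
  rwa [abs_mul, abs_of_pos hM', ← lt_div_iff₀ hM'] at hlt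

theorem exists_dist_sub_lt_of_cellIndex_eq {M : ℕ} (hM : 0 < M) {y y' : Fin n → ℝ}
    (h : cellIndex M y = cellIndex M y') :
    ∃ z : Fin n → ℤ, dist (y - y') (fun i => (z i : ℝ)) < 1 / M := by
  choose z hz using fun i => exists_abs_sub_sub_intCast_lt hM (congrFun h i)
  exact ⟨z, (dist_pi_lt_iff (by positivity)).2 fun i => by
    rw [Pi.sub_apply, Real.dist_eq]; exact hz i⟩

end

section
variable {n : ℕ} {Γ : Set (Fin n → ℝ)} {L : ℝ}

/-- The witnesses are points of `Γ` within `L` of the grid points `2L k`, `k ∈ {0, …, m-1}ⁿ`. -/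
theorem pow_le_encard_inter_ball (hL : 0 < L) (hΓ : ∀ x, ∃ γ ∈ Γ, dist γ x < L) {m : ℕ}
    (hm : 0 < m) : ((m ^ n : ℕ) : ℕ∞) ≤ (Γ ∩ ball (fun _ => L * (m - 1)) (L * m)).encard := by
  have hm1 : (1 : ℝ) ≤ m := by exact_mod_cast hm
  set g : (Fin n → Fin m) → Fin n → ℝ := fun k i => 2 * L * (k i : ℕ)
  choose γ hγΓ hγ using fun k => hΓ (g k)
  have hγinj : Function.Injective γ := fun k k' hkk' => funext fun i => Fin.ext <| by
    have hdist : dist (g k) (g k') < 2 * L := by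
      calc dist (g k) (g k') ≤ dist (γ k) (g k) + dist (γ k') (g k') := by
            rw [hkk']; exact dist_triangle_left _ _ _
        _ < 2 * L := by linarith [hγ k, hγ k']
    have hi := abs_lt.1 ((dist_le_pi_dist _ _ i).trans_lt hdist)
    simp only [g, ← mul_sub] at hi
    have h1 : ((k i : ℕ) : ℝ) < (k' i : ℕ) + 1 := by nlinarith
    have h2 : ((k' i : ℕ) : ℝ) < (k i : ℕ) + 1 := by nlinarith
    have h1' : (k i : ℕ) < k' i + 1 := by exact_mod_cast h1
    have h2' : (k' i : ℕ) < k i + 1 := by exact_mod_cast h2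
    omega
  have hmem : ∀ k, γ k ∈ Γ ∩ ball (fun _ => L * (m - 1)) (L * m) := fun k => by
    refine ⟨hγΓ k, ?_⟩
    have hgk : dist (g k) (fun _ => L * (m - 1)) ≤ L * (m - 1) := by
      refine (dist_pi_le_iff (by nlinarith)).2 fun i => ?_
      have hki : ((k i : ℕ) : ℝ) ≤ m - 1 := by
        have := (k i).isLt; rw [le_sub_iff_add_le]; exact_mod_cast this
      rw [Real.dist_eq, abs_le]
      constructor <;> nlinarith [Nat.cast_nonneg (α := ℝ) (k i : ℕ)]
    calc dist (γ k) _ ≤ dist (γ k) (g k) + dist (g k) _ := dist_triangle _ _ _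
      _ < L * m := by linarith [hγ k]
  calc ((m ^ n : ℕ) : ℕ∞) = (range γ).encard := by
        rw [← image_univ, hγinj.injOn.encard_image, encard_univ, ENat.card_eq_coe_fintype_card]
        simp
    _ ≤ _ := encard_le_encard (range_subset_iff.2 hmem)

theorem inv_two_mul_pow_le_DRplus (hZ : Γ ⊆ intLat n) (hL : 0 < L)
    (hΓ : ∀ x, ∃ γ ∈ Γ, dist γ x < L) {v : Fin n → ℝ} (hv : v ∉ intLat n) {m : ℕ} (hm : 0 < m) :
    (1 / (2 * L)) ^ n ≤ DRplus (L * m) ((· + v) '' Γ) Γ := by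
  have hULF : UniformlyLocallyFinite (symmDiff ((· + v) '' Γ) Γ) :=
    ((uniformlyLocallyFinite_intLat.mono hZ).image_add_right v).symmDiff
      (uniformlyLocallyFinite_intLat.mono hZ)
  have hsub : Γ ⊆ symmDiff ((· + v) '' Γ) Γ := by
    refine fun y hy => Or.inr ⟨hy, ?_⟩
    rintro ⟨γ, hγ, rfl⟩
    refine hv fun i => ?_
    obtain ⟨k, hk⟩ := hZ hγ i
    obtain ⟨k', hk'⟩ := hZ hy i
    exact ⟨k' - k, by push_cast; linarith [show γ i + v i = k' from hk']⟩
  set c : Fin n → ℝ := fun _ => L * (m - 1)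
  have hfin : (symmDiff ((· + v) '' Γ) Γ ∩ ball c (L * m)).Finite := hULF.finite_inter_ball c _
  have hcount : m ^ n ≤ (symmDiff ((· + v) '' Γ) Γ ∩ ball c (L * m)).ncard := by
    rw [← ENat.natCast_le_natCast, hfin.cast_ncard_eq]
    exact (pow_le_encard_inter_ball hL hΓ hm).trans
      (encard_le_encard (inter_subset_inter_left _ hsub))
  have hm' : (0 : ℝ) < m := by exact_mod_cast hm
  calc (1 / (2 * L)) ^ n = (m : ℝ) ^ n / volBall n (L * m) := by
        rw [volBall_eq (by positivity), ← div_pow]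
        congr 1
        field_simp
    _ ≤ _ / volBall n (L * m) := div_le_div_of_nonneg_right (by exact_mod_cast hcount) volBall_nonneg
    _ ≤ _ := ncard_inter_ball_div_le_DRplus hULF c

theorem exists_transSet_subset_intLat (hZ : Γ ⊆ intLat n) (hΓ : RelDense Γ) :
    ∃ ε₀ > 0, ∀ ε ≤ ε₀, ∀ R, transSet Γ ε R ⊆ intLat n := by
  obtain ⟨L, hL, hΓ⟩ := hΓ
  refine ⟨(1 / (2 * L)) ^ n, by positivity, fun ε hε R t ht => ?_⟩
  by_contra hv
  obtain ⟨m, hm⟩ := exists_nat_ge (R / L)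
  have hR : R ≤ L * (m + 1 : ℕ) := by
    rw [div_le_iff₀ hL] at hm; push_cast; nlinarith
  linarith [ht _ hR, inv_two_mul_pow_le_DRplus hZ hL hΓ hv m.succ_pos]

end

theorem exists_nat_mulVec_nsmul_intLat {n : ℕ} (A : Matrix (Fin n) (Fin n) ℝ) :
    ∃ D : ℕ, 0 < D ∧ ∀ i ∈ IQ A, ∀ z ∈ intLat n, ∃ m : ℤ, A.mulVec (D • z) i = m := by
  have hden : ∀ i j, ∃ d : ℕ, 0 < d ∧ (i ∈ IQ A → ∃ a : ℤ, A i j * d = a) := fun i j => by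
    by_cases hi : i ∈ IQ A
    · obtain ⟨q, hq⟩ := hi j
      exact ⟨q.den, q.pos, fun _ => ⟨q.num, by rw [hq]; exact_mod_cast q.mul_den_eq_num⟩⟩
    · exact ⟨1, one_pos, fun h => absurd h hi⟩
  choose d hd0 hd using hden
  refine ⟨∏ i, ∏ j, d i j, Finset.prod_pos fun i _ => Finset.prod_pos fun j _ => hd0 i j,
    fun i hi z hz => ?_⟩
  have hterm : ∀ j, ∃ a : ℤ, A i j * ((∏ i, ∏ j, d i j) • z) j = a := fun j => by
    obtain ⟨a, ha⟩ := hd i j hi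
    obtain ⟨e, he⟩ := (Finset.dvd_prod_of_mem _ (Finset.mem_univ j)).trans
      (Finset.dvd_prod_of_mem (fun i => ∏ j, d i j) (Finset.mem_univ i))
    obtain ⟨k, hk⟩ := hz j
    refine ⟨a * e * k, ?_⟩
    rw [Pi.smul_apply, he, hk, nsmul_eq_mul]
    push_cast
    rw [← ha]
    ring
  choose a ha using hterm
  exact ⟨∑ j, a j, by simp only [Matrix.mulVec, dotProduct, ha, Int.cast_sum]⟩

theorem stmt13_general {n : ℕ} (Γ : Set (Fin n → ℝ)) (hZ : Γ ⊆ intLat n) (hΓ : IsAPP Γ)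
    (ε δ : ℝ) (hε : 0 < ε) (hδ : 0 < δ)
    (A : Matrix (Fin n) (Fin n) ℝ) :
    ∃ R > (0:ℝ), ∃ N : Set (Fin n → ℝ), RelDense N ∧
      (∀ R' ≥ R, ∀ v ∈ N, DRplus R' ((· + v) '' Γ) Γ < ε) ∧
      (∀ v ∈ N, ∃ z : Fin n → ℤ, dist (A.mulVec v) (fun i => (z i : ℝ)) < δ) ∧
      (∀ i ∈ IQ A, ∀ v ∈ N, ∃ m : ℤ, A.mulVec v i = (m : ℝ)) := by
  obtain ⟨⟨-, hdense⟩, hAPP⟩ := hΓ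
  have hULF := uniformlyLocallyFinite_intLat.mono hZ
  obtain ⟨ε₀, hε₀, hlat⟩ := exists_transSet_subset_intLat hZ hdense
  obtain ⟨D, hD, hDA⟩ := exists_nat_mulVec_nsmul_intLat A
  obtain ⟨M, hM⟩ := exists_nat_one_div_lt hδ
  obtain ⟨R, hR, hT⟩ := hAPP (min ε₀ (ε / (2 * D))) (by positivity)
  set S := (D • ·) '' transSet Γ (min ε₀ (ε / (2 * D))) R
  have hS : ∀ u ∈ S, u ∈ transSet Γ (ε / 2) R ∧ ∀ i ∈ IQ A, ∃ m : ℤ, A.mulVec u i = m := by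
    rintro _ ⟨t, ht, rfl⟩
    refine ⟨transSet_mono ?_ (nsmul_mem_transSet hULF ht hD), fun i hi =>
      hDA i hi t (hlat _ (min_le_left _ _) R ht)⟩
    calc (D : ℝ) * min ε₀ (ε / (2 * D)) ≤ D * (ε / (2 * D)) := by gcongr; exact min_le_right _ _
      _ = ε / 2 := by field_simp
  refine ⟨R, hR, {v | ∃ u ∈ S, ∃ f ∈ S, cellIndex (M + 1) (A.mulVec u) =
    cellIndex (M + 1) (A.mulVec f) ∧ v = u - f}, (hT.image_nsmul hD).sub_of_finite _, ?_, ?_, ?_⟩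
  · rintro R' hR' _ ⟨u, hu, f, hf, -, rfl⟩
    simpa using sub_mem_transSet hULF (hS u hu).1 (hS f hf).1 R' hR'
  · rintro _ ⟨u, -, f, -, hcell, rfl⟩
    obtain ⟨z, hz⟩ := exists_dist_sub_lt_of_cellIndex_eq M.succ_pos hcell
    exact ⟨z, by rw [Matrix.mulVec_sub]; push_cast at hz; linarith⟩
  · rintro i hi _ ⟨u, hu, f, hf, -, rfl⟩
    obtain ⟨a, ha⟩ := (hS u hu).2 i hi
    obtain ⟨b, hb⟩ := (hS f hf).2 i hi
    exact ⟨a - b, by rw [Matrix.mulVec_sub, Pi.sub_apply, ha, hb, Int.cast_sub]⟩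

theorem stmt13 {n : ℕ} (Γ : Set (Fin n → ℝ)) (hZ : Γ ⊆ intLat n) (hΓ : IsAPP Γ)
    (ε δ : ℝ) (hε : 0 < ε) (hδ : 0 < δ)
    (A : Matrix (Fin n) (Fin n) ℝ) (hA : IsUnit A.det) :
    ∃ R > (0:ℝ), ∃ N : Set (Fin n → ℝ), RelDense N ∧
      (∀ R' ≥ R, ∀ v ∈ N, DRplus R' ((· + v) '' Γ) Γ < ε) ∧
      (∀ v ∈ N, ∃ z : Fin n → ℤ, dist (A.mulVec v) (fun i => (z i : ℝ)) < δ) ∧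
      (∀ i ∈ IQ A, ∀ v ∈ N, ∃ m : ℤ, A.mulVec v i = (m : ℝ)) :=
  stmt13_general Γ hZ hΓ ε δ hε hδ A
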